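/- arXiv:0810.0591 — 2 statements merged into one kernel-verified Lean document; each statement's English description precedes it below -/
import Mathlib

section
/- Let z ∈ ℂ. The stabilizer of z under the natural action of Γ on ℂ is nontrivial (i.e., not the trivial subgroup) if and only if 2z lies in ℤ[i], that is, if and only if there exist integers a and b with 2z = a + b·i. -/
open Complex

/-- Every complex fourth root of unity is a Gaussian integer. -/
lemma exists_gaussian_of_pow_four_eq_one {u : ℂ} (hu : u ^ 4 = 1) :
    ∃ g : GaussianInt, (g : ℂ) = u := by
  have h1 : (u ^ 2 - 1) * (u ^ 2 + 1) = 0 := by linear_combination hu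
  rcases mul_eq_zero.mp h1 with h | h
  · have h2 : (u - 1) * (u + 1) = 0 := by linear_combination h
    rcases mul_eq_zero.mp h2 with h3 | h3
    · exact ⟨1, by rw [map_one, (sub_eq_zero.mp h3).symm]⟩
    · exact ⟨-1, by rw [map_neg, map_one, (eq_neg_of_add_eq_zero_left h3).symm]⟩
  · have h2 : (u - I) * (u + I) = 0 := by linear_combination h - Complex.I_sq
    rcases mul_eq_zero.mp h2 with h3 | h3
    · refine ⟨⟨0, 1⟩, ?_⟩
      rw [sub_eq_zero.mp h3, GaussianInt.toComplex_def']
      simp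
    · refine ⟨⟨0, -1⟩, ?_⟩
      rw [eq_neg_of_add_eq_zero_left h3, GaussianInt.toComplex_def']
      push_cast
      ring

/-- The group `Γ` of bijections of `ℂ` of the form `z ↦ u·z + λ` with `u⁴ = 1` and
`λ` in the image of the Gaussian integers, viewed as a subgroup of `Equiv.Perm ℂ`. -/
def GammaGroup : Subgroup (Equiv.Perm ℂ) where
  carrier := {e | ∃ u lam : ℂ, u ^ 4 = 1 ∧ (∃ g : GaussianInt, (g : ℂ) = lam) ∧
    ∀ z : ℂ, e z = u * z + lam}
  one_mem' := ⟨1, 0, one_pow 4, ⟨0, map_zero _⟩, fun z => by simp⟩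
  mul_mem' := by
    rintro f g ⟨u₁, lam₁, hu₁, ⟨g₁, hg₁⟩, hf⟩ ⟨u₂, lam₂, hu₂, ⟨g₂, hg₂⟩, hg⟩
    obtain ⟨gu₁, hgu₁⟩ := exists_gaussian_of_pow_four_eq_one hu₁
    refine ⟨u₁ * u₂, u₁ * lam₂ + lam₁, by rw [mul_pow, hu₁, hu₂, one_mul],
      ⟨gu₁ * g₂ + g₁, by rw [map_add, map_mul, hgu₁, hg₂, hg₁]⟩, fun z => ?_⟩
    show f (g z) = _
    rw [hg, hf]
    ring
  inv_mem' := by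
    rintro e ⟨u, lam, hu, ⟨g, hg⟩, he⟩
    obtain ⟨gu, hgu⟩ := exists_gaussian_of_pow_four_eq_one hu
    refine ⟨u ^ 3, -(u ^ 3 * lam), by rw [← pow_mul, mul_comm, pow_mul, hu, one_pow],
      ⟨-(gu ^ 3 * g), by rw [map_neg, map_mul, map_pow, hgu, hg]⟩, fun z => ?_⟩
    have key : e (u ^ 3 * z + -(u ^ 3 * lam)) = z := by
      rw [he]; linear_combination (z - lam) * hu
    have h2 : e (e⁻¹ z) = e (u ^ 3 * z + -(u ^ 3 * lam)) := by
      rw [key]; exact e.apply_symm_apply z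
    exact e.injective h2

/-- The rotation `c₀ : z ↦ i·z`. -/
noncomputable def c0 : Equiv.Perm ℂ := Equiv.mulLeft₀ I I_ne_zero

/-- The map `c₁ : z ↦ 1 + i·z`. -/
noncomputable def c1 : Equiv.Perm ℂ := (Equiv.mulLeft₀ I I_ne_zero).trans (Equiv.addLeft 1)

lemma c0_apply (z : ℂ) : c0 z = I * z := rfl

lemma c1_apply (z : ℂ) : c1 z = 1 + I * z := rfl

lemma c0_mem : c0 ∈ GammaGroup :=
  ⟨I, 0, Complex.I_pow_four, ⟨0, map_zero _⟩, fun z => by rw [c0_apply, add_zero]⟩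

lemma c1_mem : c1 ∈ GammaGroup :=
  ⟨I, 1, Complex.I_pow_four, ⟨1, map_one _⟩, fun z => by rw [c1_apply, add_comm]⟩


/-! A nontrivial element `w ↦ u * w + λ` of `Γ` fixing `z` has `u ≠ 1`, so `(1 - u) * z = λ`
lies in `ℤ[i]`; as `1 - u` divides `2` in `ℤ[i]` for each fourth root of unity `u ≠ 1`, so does
`2 * z`. Conversely, if `2 * z ∈ ℤ[i]`, the point reflection `w ↦ 2 * z - w` at `z` lies in `Γ`. -/

lemma eq_one_or_neg_one_or_I_or_neg_I_of_pow_four_eq_one {u : ℂ} (hu : u ^ 4 = 1) :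
    u = 1 ∨ u = -1 ∨ u = I ∨ u = -I := by
  have h : (u - 1) * (u + 1) * (u - I) * (u + I) = 0 := by
    linear_combination hu + (1 - u ^ 2) * I_sq
  simp only [mul_eq_zero, sub_eq_zero, add_eq_zero_iff_eq_neg] at h
  tauto

lemma exists_gaussianInt_mul_one_sub_eq_two {u : ℂ} (hu : u ^ 4 = 1) (hu1 : u ≠ 1) :
    ∃ w : GaussianInt, (w : ℂ) * (1 - u) = 2 := by
  rcases eq_one_or_neg_one_or_I_or_neg_I_of_pow_four_eq_one hu with rfl | rfl | rfl | rfl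
  · exact absurd rfl hu1
  · exact ⟨1, by norm_num⟩
  · exact ⟨⟨1, 1⟩, by rw [GaussianInt.toComplex_def']; push_cast; linear_combination -I_sq⟩
  · exact ⟨⟨1, -1⟩, by rw [GaussianInt.toComplex_def']; push_cast; linear_combination -I_sq⟩

lemma exists_gaussianInt_eq_two_mul_of_apply_eq_self {e : Equiv.Perm ℂ} (he : e ∈ GammaGroup)
    (he1 : e ≠ 1) {z : ℂ} (hez : e z = z) : ∃ g : GaussianInt, (g : ℂ) = 2 * z := by
  obtain ⟨u, lam, hu, ⟨g, rfl⟩, he⟩ := he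
  have hfix : (1 - u) * z = g := by linear_combination hez.symm.trans (he z)
  have hu1 : u ≠ 1 := by
    rintro rfl
    have hg : (g : ℂ) = 0 := by rw [← hfix, sub_self, zero_mul]
    exact he1 (Equiv.ext fun w => by rw [he, hg, one_mul, add_zero, Equiv.Perm.one_apply])
  obtain ⟨w, hw⟩ := exists_gaussianInt_mul_one_sub_eq_two hu hu1
  exact ⟨w * g, by rw [map_mul, ← hfix, ← hw]; ring⟩

lemma pointReflection_mem_GammaGroup {z : ℂ} (hz : ∃ g : GaussianInt, (g : ℂ) = 2 * z) :
    Equiv.pointReflection z ∈ GammaGroup :=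
  ⟨-1, 2 * z, by norm_num, hz, fun w => by
    rw [Equiv.pointReflection_apply, vsub_eq_sub, vadd_eq_add]; ring⟩

lemma pointReflection_ne_one (z : ℂ) : Equiv.pointReflection z ≠ 1 := fun h => by
  have h1 : Equiv.pointReflection z (z + 1) = z + 1 := by rw [h, Equiv.Perm.one_apply]
  rw [Equiv.pointReflection_apply, vsub_eq_sub, vadd_eq_add] at h1
  have h2 : (2 : ℂ) = 0 := by linear_combination -h1
  exact two_ne_zero h2

lemma exists_int_eq_add_mul_I_iff (w : ℂ) :
    (∃ a b : ℤ, w = a + b * I) ↔ ∃ g : GaussianInt, (g : ℂ) = w :=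
  ⟨fun ⟨a, b, h⟩ => ⟨⟨a, b⟩, by rw [GaussianInt.toComplex_def', h]⟩,
    fun ⟨g, h⟩ => ⟨g.re, g.im, by rw [← h, GaussianInt.toComplex_def]⟩⟩

/-- A point `z ∈ ℂ` has nontrivial stabilizer in `Γ` if and only if
`2z ∈ ℤ[i]`. -/
theorem stmt10 (z : ℂ) :
    MulAction.stabilizer GammaGroup z ≠ ⊥ ↔
      ∃ a b : ℤ, 2 * z = (a : ℂ) + (b : ℂ) * Complex.I := by
  rw [Subgroup.ne_bot_iff_exists_ne_one, exists_int_eq_add_mul_I_iff]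
  constructor
  · rintro ⟨⟨⟨e, he⟩, hez⟩, hne⟩
    exact exists_gaussianInt_eq_two_mul_of_apply_eq_self he
      (fun h => hne (by subst h; rfl)) hez
  · intro hz
    exact ⟨⟨⟨_, pointReflection_mem_GammaGroup hz⟩, Equiv.pointReflection_self z⟩,
      fun h => pointReflection_ne_one z (congrArg Subtype.val (congrArg Subtype.val h))⟩
end

section
/- Let Δ be a subgroup of Γ whose index is odd (in particular finite). Then Δ contains an element of order 4. -/
/-! The rotation `c₀ : z ↦ i·z` has order `4`, so it generates a `2`-group acting on the cosets
`Γ ⧸ Δ`. Their number is odd, so the action has a fixed coset `gΔ`; then `g⁻¹ c₀ g ∈ Δ` is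
again of order `4`. -/

open Complex

section FixedPoint

variable {G : Type*} [Group G] {p : ℕ} [Fact p.Prime]

theorem IsPGroup.exists_forall_inv_mul_mul_mem_of_not_dvd_index {P : Subgroup G}
    (hP : IsPGroup p P) (H : Subgroup G) (hH : ¬p ∣ H.index) :
    ∃ g : G, ∀ x ∈ P, g⁻¹ * x * g ∈ H := by
  obtain ⟨q, hq⟩ := hP.nonempty_fixed_point_of_prime_not_dvd_card (G ⧸ H) hH
  induction q using QuotientGroup.induction_on with
  | H g =>
    refine ⟨g, fun x hx => ?_⟩
    have hfix : (x • g : G ⧸ H) = g := hq ⟨x, hx⟩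
    simpa [mul_assoc] using H.inv_mem (QuotientGroup.eq.mp hfix)

theorem exists_inv_mul_mul_mem_of_orderOf_eq_prime_pow {x : G} {n : ℕ} (hx : orderOf x = p ^ n)
    (H : Subgroup G) (hH : ¬p ∣ H.index) : ∃ g : G, g⁻¹ * x * g ∈ H :=
  have hP : IsPGroup p (Subgroup.zpowers x) := .of_card (by rw [Nat.card_zpowers, hx])
  (hP.exists_forall_inv_mul_mul_mem_of_not_dvd_index H hH).imp fun _ hg =>
    hg x (Subgroup.mem_zpowers x)

theorem orderOf_inv_mul_mul (g x : G) : orderOf (g⁻¹ * x * g) = orderOf x := by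
  simpa using (MulAut.conj g⁻¹).orderOf_eq x

end FixedPoint

lemma c0_pow_apply (k : ℕ) (z : ℂ) : (c0 ^ k) z = I ^ k * z := by
  induction k with
  | zero => simp
  | succ k ih => rw [pow_succ', Equiv.Perm.mul_apply, ih, c0_apply, pow_succ']; ring

lemma orderOf_c0 : orderOf c0 = 2 ^ 2 := by
  refine orderOf_eq_prime_pow (fun h => ?_) (Equiv.ext fun z => ?_)
  · have h1 := congrArg (· (1 : ℂ)) h
    norm_num [c0_pow_apply] at h1
  · simp [c0_pow_apply]

/-- A subgroup of `Γ` of odd index contains an element of order `4`. -/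
theorem stmt11 (Δ : Subgroup GammaGroup) (h : Odd Δ.index) :
    ∃ g ∈ Δ, orderOf g = 4 := by
  have hc0 : orderOf (⟨c0, c0_mem⟩ : GammaGroup) = 2 ^ 2 := by
    rw [Subgroup.orderOf_mk, orderOf_c0]
  obtain ⟨g, hg⟩ := exists_inv_mul_mul_mem_of_orderOf_eq_prime_pow hc0 Δ h.not_two_dvd_nat
  exact ⟨_, hg, by rw [orderOf_inv_mul_mul, hc0]; rfl⟩
end
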